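/- Let X be a nominal set and W ⊆ 𝕍 a finite set with |W| = m+1. For any orbit O of X whose elements have least support of cardinality k ≤ m, the number of elements of O with least support contained in W is at most C(m+1, k) · k! = (m+1)!/(m+1−k)!, which is at most (m+1)!. Consequently, if X has n orbits and every element of X has support of cardinality at most m, then |{x ∈ X ∣ supp(x) ⊆ W}| ≤ n·(m+1)!. -/

import Mathlib

open Pointwise

/-- The subgroup of finite permutations of the atoms `ℕ`. -/
def FinPerm : Subgroup (Equiv.Perm ℕ) where
  carrier := {π | {v | π v ≠ v}.Finite}
  one_mem' := by simp
  mul_mem' := by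
    intro a b ha hb
    refine (ha.union hb).subset ?_
    intro v hv
    simp only [Set.mem_setOf_eq, Equiv.Perm.mul_apply] at hv
    by_contra h
    simp only [Set.mem_union, Set.mem_setOf_eq, not_or, not_not] at h
    rw [h.2] at hv
    exact hv h.1
  inv_mem' := by
    intro a ha
    refine ha.subset ?_
    intro v hv
    simp only [Set.mem_setOf_eq] at hv ⊢
    intro h
    exact hv (by conv_lhs => rw [← h, ← Equiv.Perm.mul_apply, inv_mul_cancel, Equiv.Perm.one_apply])


/-- Equivariant maps between `FinPerm`-sets. -/
def Equivariant {X Y : Type*} [MulAction FinPerm X] [MulAction FinPerm Y] (f : X → Y) : Prop :=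
  ∀ (π : FinPerm) (x : X), f (π • x) = π • f x

/-- A finite set of atoms supports an element. -/
def Supports {X : Type*} [MulAction FinPerm X] (S : Finset ℕ) (x : X) : Prop :=
  ∀ π : FinPerm, (∀ v ∈ S, π • v = v) → π • x = x

/-- A nominal set: a `FinPerm`-set with a least finite support function. -/
class NominalSet (X : Type*) [MulAction FinPerm X] where
  supp : X → Finset ℕ
  supports_supp : ∀ x : X, Supports (supp x) x
  supp_least : ∀ (x : X) (S : Finset ℕ), Supports S x → supp x ⊆ S

open NominalSet

/-!
Every `y` in the orbit of `x` is `π • x` for some finite permutation `π`, and then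
`supp y = π • supp x`; moreover `y` depends only on the restriction of `π` to `supp x`. When
`supp y ⊆ W` this restriction is an injection `supp x ↪ W`, so the orbit has at most
`|W|.descFactorial |supp x| ≤ |W|!` elements supported in `W`. Summing over the orbits gives
the global bound.
-/

theorem Nat.descFactorial_le_factorial (n k : ℕ) : n.descFactorial k ≤ n.factorial := by
  rcases le_or_gt k n with hkn | hnk
  · rw [← Nat.factorial_mul_descFactorial hkn]
    exact Nat.le_mul_of_pos_left _ (Nat.factorial_pos _)
  · simp [Nat.descFactorial_of_lt hnk]

section

variable {X : Type*} [MulAction FinPerm X]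

theorem Supports.smul {S : Finset ℕ} {x : X} (h : Supports S x) (π : FinPerm) :
    Supports (π • S) (π • x) := by
  intro σ hσ
  have hconj : (π⁻¹ * σ * π) • x = x :=
    h _ fun v hv => by
      rw [mul_smul, mul_smul, hσ _ (Finset.smul_mem_smul_finset hv), inv_smul_smul]
  calc σ • π • x = π • (π⁻¹ * σ * π) • x := by rw [mul_assoc, mul_smul, smul_inv_smul, mul_smul]
    _ = π • x := by rw [hconj]

theorem Supports.smul_eq_smul {S : Finset ℕ} {x : X} (h : Supports S x) {π σ : FinPerm}
    (hπσ : ∀ v ∈ S, π • v = σ • v) : π • x = σ • x := by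
  have hfix : (σ⁻¹ * π) • x = x := h _ fun v hv => by rw [mul_smul, hπσ v hv, inv_smul_smul]
  conv_rhs => rw [← hfix]
  rw [mul_smul, smul_inv_smul]

end

namespace NominalSet

variable {X : Type*} [MulAction FinPerm X] [NominalSet X]

theorem supp_smul (π : FinPerm) (x : X) : supp (π • x) = π • supp x := by
  refine (supp_least _ _ ((supports_supp x).smul π)).antisymm ?_
  rw [Finset.smul_finset_subset_iff]
  simpa using supp_least _ _ ((supports_supp (π • x)).smul π⁻¹)

theorem encard_orbit_supp_subset_le (x : X) (W : Finset ℕ) :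
    {y ∈ MulAction.orbit FinPerm x | supp y ⊆ W}.encard ≤ W.card.descFactorial (supp x).card := by
  set s := {y ∈ MulAction.orbit FinPerm x | supp y ⊆ W}
  choose π hπ using fun y : s => MulAction.mem_orbit_iff.mp y.2.1
  have maps_to (y : s) {v : ℕ} (hv : v ∈ supp x) : π y • v ∈ W :=
    y.2.2 (by rw [← hπ y, supp_smul]; exact Finset.smul_mem_smul_finset hv)
  let F : s → (supp x ↪ W) := fun y =>
    ⟨fun v => ⟨π y • (v : ℕ), maps_to y v.2⟩,
      fun a b hab => Subtype.ext (smul_left_cancel _ (congrArg Subtype.val hab))⟩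
  have hF : Function.Injective F := fun y z hyz => Subtype.ext <| by
    rw [← hπ y, ← hπ z]
    exact (supports_supp x).smul_eq_smul fun v hv =>
      congrArg Subtype.val (DFunLike.congr_fun hyz ⟨v, hv⟩)
  calc s.encard = ENat.card s := rfl
    _ ≤ ENat.card (supp x ↪ W) := ENat.card_le_card_of_injective hF
    _ = W.card.descFactorial (supp x).card := by simp [Fintype.card_embedding_eq]

theorem encard_supp_subset_le [Finite (MulAction.orbitRel.Quotient FinPerm X)] (W : Finset ℕ) :
    {x : X | supp x ⊆ W}.encard
      ≤ Nat.card (MulAction.orbitRel.Quotient FinPerm X) * W.card.factorial := by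
  have := Fintype.ofFinite (MulAction.orbitRel.Quotient FinPerm X)
  have hcover : {x : X | supp x ⊆ W}
      = ⋃ q : MulAction.orbitRel.Quotient FinPerm X, {y ∈ q.orbit | supp y ⊆ W} := by
    ext x
    simp [MulAction.orbitRel.Quotient.mem_orbit]
  have horbit (q : MulAction.orbitRel.Quotient FinPerm X) :
      {y ∈ q.orbit | supp y ⊆ W}.encard ≤ W.card.factorial := by
    rw [q.orbit_eq_orbit_out Quotient.out_eq']
    exact (encard_orbit_supp_subset_le _ W).trans
      (by exact_mod_cast Nat.descFactorial_le_factorial _ _)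
  calc {x : X | supp x ⊆ W}.encard
      ≤ ∑ q : MulAction.orbitRel.Quotient FinPerm X, {y ∈ q.orbit | supp y ⊆ W}.encard :=
        hcover ▸ Set.encard_iUnion_le_of_fintype _
    _ ≤ ∑ _q : MulAction.orbitRel.Quotient FinPerm X, (W.card.factorial : ℕ∞) :=
        Finset.sum_le_sum fun q _ => horbit q
    _ = _ := by simp [Nat.card_eq_fintype_card]

end NominalSet

/-- Counting elements with support inside a fixed `(m+1)`-element set `W` of atoms:
any orbit whose elements have supports of size `k ≤ m` contributes at most
`C(m+1,k)·k! = (m+1)!/(m+1−k)! ≤ (m+1)!` elements, and an orbit-finite nominal set with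
`n` orbits and supports of size at most `m` has at most `n·(m+1)!` such elements. -/
theorem count_supp_subset_bound {X : Type*} [MulAction FinPerm X] [NominalSet X]
    (W : Finset ℕ) (m : ℕ) (hW : W.card = m + 1) :
    (∀ (x₀ : X) (k : ℕ), k ≤ m →
        (∀ y ∈ MulAction.orbit FinPerm x₀, (supp y).card = k) →
        {y ∈ MulAction.orbit FinPerm x₀ | supp y ⊆ W}.encard
            ≤ (((m+1).choose k * k.factorial : ℕ) : ℕ∞) ∧
          (m+1).choose k * k.factorial = (m+1).factorial / (m+1-k).factorial ∧
          (m+1).choose k * k.factorial ≤ (m+1).factorial) ∧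
    (∀ n : ℕ, Finite (MulAction.orbitRel.Quotient FinPerm X) →
        Nat.card (MulAction.orbitRel.Quotient FinPerm X) = n →
        (∀ x : X, (supp x).card ≤ m) →
        {x : X | supp x ⊆ W}.encard ≤ ((n * (m+1).factorial : ℕ) : ℕ∞)) := by
  refine ⟨fun x₀ k hk hcard => ?_, fun n _ hn _ => ?_⟩
  · have hx₀ : (supp x₀).card = k := hcard x₀ (MulAction.mem_orbit_self x₀)
    have hdesc : (m+1).choose k * k.factorial = (m+1).descFactorial k := by
      rw [Nat.descFactorial_eq_factorial_mul_choose, mul_comm]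
    rw [hdesc]
    refine ⟨?_, Nat.descFactorial_eq_div (by omega), Nat.descFactorial_le_factorial _ _⟩
    simpa [hW, hx₀] using encard_orbit_supp_subset_le x₀ W
  · simpa [hn, hW] using encard_supp_subset_le (X := X) W
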